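/- arXiv:math/0612798 — 3 statements merged into one kernel-verified Lean document; each statement's English description precedes it below -/
import Mathlib

section
/- Let g be a complex simple Lie algebra, identify g ≅ g* via an invariant form, and let χ ∈ g be a regular nilpotent element contained in an sl_2-triple {e = χ, 2ρ̌, f}. Let P̄_1,…,P̄_ℓ be homogeneous generators of (Fun g*)^g of degrees d_1+1,…,d_ℓ+1. For each i, expand the differential of x ↦ P̄_i(x + uχ) at x = ρ̌ as d P̄_i(x+uχ)|_{x=ρ̌} = Σ_{k=0}^{d_i} C_{i,k} u^k with C_{i,k} ∈ g. Then the elements C_{i,k}, for i = 1,…,ℓ and 0 ≤ k ≤ d_i, are linearly independent and span the Borel subalgebra b = ⊕_{j≥0} g_j (the nonnegative eigenspaces of ad ρ̌). -/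
/-!
Let `p_{i,k}` be the coefficient of `u ^ k` in `exp (-u • ad e) C_{i,0}`; it lies in `g_k`.
Since `ad ρ̌` is invertible off `g_0`, the recursion shows inductively that
`C_{i,k} ≡ p_{i,k}` modulo `g_0 ⊕ ⋯ ⊕ g_{k-1}`, and then `[e, C_{i,d_i}] = 0` forces
`[e, p_{i,d_i}] = 0`. As `ad e` maps `g_j` onto `g_{j+1}` and the `C_{i,0}` span `g_0`, the
`p_{i,j}` with `j ≤ d_i` span `g_j`. By triangularity the `C_{i,k}` span `b`, and there are
exactly `dim b` of them, so they are linearly independent.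
-/

namespace DirectSum

theorem mem_biSup_iff_decompose_eq_zero {ι R M : Type*} [DecidableEq ι] [Semiring R]
    [AddCommMonoid M] [Module R M] (𝒜 : ι → Submodule R M) [Decomposition 𝒜]
    {T : Set ι} {x : M} :
    x ∈ ⨆ i ∈ T, 𝒜 i ↔ ∀ i ∉ T, (decompose 𝒜 x i : M) = 0 := by
  classical
  constructor
  · intro hx j hj
    let π : M →ₗ[R] M := (𝒜 j).subtype ∘ₗ component R ι (fun i => 𝒜 i) j ∘ₗ
      (decomposeLinearEquiv 𝒜).toLinearMap
    have hT : ⨆ i ∈ T, 𝒜 i ≤ LinearMap.ker π := iSup₂_le fun i hi y hy =>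
      decompose_of_mem_ne 𝒜 hy (ne_of_mem_of_not_mem hi hj)
    exact hT hx
  · intro h
    rw [← sum_support_decompose 𝒜 x]
    refine Submodule.sum_mem _ fun i _ => ?_
    by_cases hi : i ∈ T
    · exact le_biSup 𝒜 hi (Submodule.coe_mem _)
    · simp only [h i hi, Submodule.zero_mem]

end DirectSum

open DirectSum

section

variable {K L : Type*} [Field K] [LieRing L] [LieAlgebra K L]

variable (K) in
/-- The coefficient of `u ^ k` in `exp (-u • ad e) x`. -/
noncomputable def expAdCoeff (e x : L) : ℕ → L
  | 0 => x
  | k + 1 => (-((k : K) + 1))⁻¹ • ⁅e, expAdCoeff e x k⁆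

theorem lie_expAdCoeff [CharZero K] (e x : L) (k : ℕ) :
    ⁅e, expAdCoeff K e x k⁆ = -((k : K) + 1) • expAdCoeff K e x (k + 1) := by
  rw [expAdCoeff, smul_inv_smul₀ (neg_ne_zero.mpr (Nat.cast_add_one_ne_zero k))]

theorem le_span_expAdCoeff [CharZero K] {G : ℤ → Submodule K L} {ι : Type*} {e : L}
    {x : ι → L} {d : ι → ℕ} (hspan : G 0 ≤ Submodule.span K (Set.range x))
    (htop : ∀ i, ⁅e, expAdCoeff K e (x i) (d i)⁆ = 0)
    (hsurj : ∀ j : ℕ, ∀ y ∈ G ((j : ℤ) + 1), ∃ z ∈ G (j : ℤ), ⁅e, z⁆ = y) (j : ℕ) :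
    G j ≤ Submodule.span K {y | ∃ i, j ≤ d i ∧ expAdCoeff K e (x i) j = y} := by
  induction j with
  | zero =>
    refine hspan.trans (Submodule.span_mono ?_)
    rintro _ ⟨i, rfl⟩
    exact ⟨i, Nat.zero_le _, rfl⟩
  | succ j ih =>
    intro y hy
    obtain ⟨z, hz, rfl⟩ := hsurj j y (by exact_mod_cast hy)
    have hmem := Submodule.mem_map_of_mem (f := LieAlgebra.ad K L e) (ih hz)
    rw [Submodule.map_span] at hmem
    refine Submodule.span_le.mpr ?_ hmem
    rintro _ ⟨_, ⟨i, hij, rfl⟩, rfl⟩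
    rcases hij.lt_or_eq with h | rfl
    · rw [LieAlgebra.ad_apply, lie_expAdCoeff]
      exact Submodule.smul_mem _ _ (Submodule.subset_span ⟨i, h, rfl⟩)
    · simp [htop]

/-- `g_0 ⊕ ⋯ ⊕ g_{k-1}`. -/
def truncBorel (G : ℤ → Submodule K L) (k : ℤ) : Submodule K L :=
  ⨆ j ∈ Set.Ico 0 k, G j

theorem span_eq_iSup_of_sub_mem_truncBorel {G : ℤ → Submodule K L} {ι : Type*} {d : ι → ℕ}
    {c p : ι → ℕ → L} (hp : ∀ i (k : ℕ), p i k ∈ G k)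
    (hcp : ∀ i (k : ℕ), k ≤ d i → c i k - p i k ∈ truncBorel G k)
    (hG : ∀ j : ℕ, G j ≤ Submodule.span K {y | ∃ i, j ≤ d i ∧ p i j = y}) :
    Submodule.span K (Set.range fun q : Σ i, Fin (d i + 1) => c q.1 q.2) = ⨆ j : ℕ, G j := by
  set S := Submodule.span K (Set.range fun q : Σ i, Fin (d i + 1) => c q.1 q.2)
  apply le_antisymm
  · have hB : ∀ k : ℕ, truncBorel G k ≤ ⨆ j : ℕ, G j := fun k => iSup₂_le fun j hj => by
      lift j to ℕ using hj.1
      exact le_iSup (fun j : ℕ => G j) j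
    rw [Submodule.span_le]
    rintro _ ⟨⟨i, k, hk⟩, rfl⟩
    simpa using add_mem (hB k (hcp i k (by omega))) (le_iSup (fun j : ℕ => G j) k (hp i k))
  · refine iSup_le fun j => ?_
    induction j using Nat.strong_induction_on with
    | _ j ih =>
      refine (hG j).trans (Submodule.span_le.mpr ?_)
      rintro _ ⟨i, hij, rfl⟩
      have hc : c i j ∈ S := Submodule.subset_span ⟨⟨i, j, by omega⟩, rfl⟩
      have hB : truncBorel G j ≤ S := iSup₂_le fun m hm => by
        lift m to ℕ using hm.1
        exact ih m (by exact_mod_cast hm.2)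
      simpa using sub_mem hc (hB (hcp i j hij))

def IsGradingElement (G : ℤ → Submodule K L) (ρ : L) : Prop :=
  ∀ j : ℤ, ∀ x ∈ G j, ⁅ρ, x⁆ = (j : K) • x

variable {G : ℤ → Submodule K L} [Decomposition G] {ρ : L}

theorem IsGradingElement.decompose_lie (hρ : IsGradingElement G ρ) (x : L) (m : ℤ) :
    (decompose G ⁅ρ, x⁆ m : L) = (m : K) • (decompose G x m : L) := by
  induction x using Decomposition.inductionOn G with
  | zero => simp
  | @homogeneous i y =>
    rw [hρ i y y.2, decompose_smul, DFinsupp.smul_apply, Submodule.coe_smul]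
    by_cases him : i = m
    · subst him; rfl
    · rw [decompose_of_mem_ne G y.2 him, smul_zero, smul_zero]
  | add y z hy hz =>
    simp only [lie_add, decompose_add, DirectSum.add_apply, Submodule.coe_add, hy, hz, smul_add]

theorem eq_zero_of_mem_of_mem_truncBorel {k : ℤ} {x : L} (hx : x ∈ G k)
    (hx' : x ∈ truncBorel G k) : x = 0 := by
  rw [truncBorel, mem_biSup_iff_decompose_eq_zero] at hx'
  rw [← decompose_of_mem_same G hx]
  exact hx' k fun h => lt_irrefl k h.2

variable [CharZero K]

theorem IsGradingElement.mem_biSup_of_lie_mem (hρ : IsGradingElement G ρ) {T : Set ℤ}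
    (hT : 0 ∈ T) {x : L} (hx : ⁅ρ, x⁆ ∈ ⨆ i ∈ T, G i) : x ∈ ⨆ i ∈ T, G i := by
  rw [mem_biSup_iff_decompose_eq_zero] at hx ⊢
  intro m hm
  have hm0 : (m : K) ≠ 0 := Int.cast_ne_zero.mpr (ne_of_mem_of_not_mem hT hm).symm
  exact (smul_eq_zero_iff_right hm0).mp (hρ.decompose_lie x m ▸ hx m hm)

theorem IsGradingElement.mem_of_lie_eq_smul (hρ : IsGradingElement G ρ) {j : ℤ} {x : L}
    (hx : ⁅ρ, x⁆ = (j : K) • x) : x ∈ G j := by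
  rw [← iSup_singleton (f := G) (b := j), mem_biSup_iff_decompose_eq_zero]
  intro m hm
  have hjm : (j : K) - m ≠ 0 := sub_ne_zero.mpr (Int.cast_injective.ne hm).symm
  have h := hρ.decompose_lie x m
  rw [hx, decompose_smul, DFinsupp.smul_apply, Submodule.coe_smul, ← sub_eq_zero,
    ← sub_smul] at h
  exact (smul_eq_zero_iff_right hjm).mp h

theorem IsGradingElement.lie_mem_add (hρ : IsGradingElement G ρ) {i j : ℤ} {x y : L}
    (hx : x ∈ G i) (hy : y ∈ G j) : ⁅x, y⁆ ∈ G (i + j) := by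
  refine hρ.mem_of_lie_eq_smul ?_
  rw [leibniz_lie, hρ i x hx, hρ j y hy, smul_lie, lie_smul, Int.cast_add, add_smul]

theorem IsGradingElement.lie_mem_truncBorel_succ (hρ : IsGradingElement G ρ) {e : L}
    (he : e ∈ G 1) {k : ℤ} {x : L} (hx : x ∈ truncBorel G k) :
    ⁅e, x⁆ ∈ truncBorel G (k + 1) := by
  have hle : truncBorel G k ≤ (truncBorel G (k + 1)).comap (LieAlgebra.ad K L e) :=
    iSup₂_le fun j hj y hy => le_biSup G (show 1 + j ∈ Set.Ico 0 (k + 1) by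
      obtain ⟨h0, hk⟩ := hj; constructor <;> omega) (hρ.lie_mem_add he hy)
  exact hle hx

theorem IsGradingElement.expAdCoeff_mem (hρ : IsGradingElement G ρ) {e x : L} (he : e ∈ G 1)
    (hx : x ∈ G 0) (k : ℕ) : expAdCoeff K e x k ∈ G k := by
  induction k with
  | zero => exact hx
  | succ k ih =>
    rw [expAdCoeff, Nat.cast_succ, add_comm]
    exact Submodule.smul_mem _ _ (hρ.lie_mem_add he ih)

theorem IsGradingElement.lie_expAdCoeff_succ (hρ : IsGradingElement G ρ) {e x : L}
    (he : e ∈ G 1) (hx : x ∈ G 0) (k : ℕ) :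
    ⁅ρ, expAdCoeff K e x (k + 1)⁆ = -⁅e, expAdCoeff K e x k⁆ := by
  rw [hρ _ _ (hρ.expAdCoeff_mem he hx (k + 1)), lie_expAdCoeff, neg_smul, neg_neg]
  push_cast
  rfl

theorem IsGradingElement.sub_expAdCoeff_mem_truncBorel (hρ : IsGradingElement G ρ) {e : L}
    (he : e ∈ G 1) {c : ℕ → L} {n : ℕ} (hc0 : c 0 ∈ G 0)
    (hc : ∀ k < n, ⁅ρ, c (k + 1)⁆ + ⁅e, c k⁆ = 0) :
    ∀ k ≤ n, c k - expAdCoeff K e (c 0) k ∈ truncBorel G k := by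
  intro k hk
  induction k with
  | zero => simp [expAdCoeff]
  | succ k ih =>
    have hlie : ⁅ρ, c (k + 1) - expAdCoeff K e (c 0) (k + 1)⁆
        = -⁅e, c k - expAdCoeff K e (c 0) k⁆ := by
      rw [lie_sub, hρ.lie_expAdCoeff_succ he hc0, eq_neg_of_add_eq_zero_left (hc k hk),
        lie_sub]
      abel
    push_cast
    refine hρ.mem_biSup_of_lie_mem (Set.left_mem_Ico.mpr (by positivity)) ?_
    rw [hlie]
    exact neg_mem (hρ.lie_mem_truncBorel_succ he (ih (by omega)))

theorem IsGradingElement.lie_expAdCoeff_eq_zero (hρ : IsGradingElement G ρ) {e x y : L}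
    (he : e ∈ G 1) (hx : x ∈ G 0) {n : ℕ} (hy : ⁅e, y⁆ = 0)
    (hyx : y - expAdCoeff K e x n ∈ truncBorel G n) : ⁅e, expAdCoeff K e x n⁆ = 0 := by
  refine eq_zero_of_mem_of_mem_truncBorel (G := G) (k := n + 1) ?_ ?_
  · rw [add_comm]
    exact hρ.lie_mem_add he (hρ.expAdCoeff_mem he hx n)
  · have h : ⁅e, expAdCoeff K e x n⁆ = ⁅e, y⁆ - ⁅e, y - expAdCoeff K e x n⁆ := by
      rw [lie_sub]; abel
    rw [h, hy, zero_sub]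
    exact neg_mem (hρ.lie_mem_truncBorel_succ he hyx)

end

theorem shift_coefficients_independent_and_span_borel_general
    {g : Type*} [LieRing g] [LieAlgebra ℂ g]
    (G : ℤ → Submodule ℂ g)
    (hinternal : DirectSum.IsInternal fun j : ℤ => G j)
    (ρ e : g) (he : e ∈ G 1)
    (hgrade : ∀ j : ℤ, ∀ x ∈ G j, ⁅ρ, x⁆ = (j : ℂ) • x)
    {ℓ : ℕ} (d : Fin ℓ → ℕ)
    (C : Fin ℓ → ℕ → g)
    (h0 : ∀ i, ⁅ρ, C i 0⁆ = 0)
    (hrec : ∀ (i : Fin ℓ) (k : ℕ), 0 < k → k ≤ d i →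
      ⁅ρ, C i k⁆ + ⁅e, C i (k - 1)⁆ = 0)
    (hlast : ∀ i, ⁅e, C i (d i)⁆ = 0)
    (hsurj : ∀ j : ℕ, ∀ y ∈ G ((j : ℤ) + 1), ∃ x ∈ G (j : ℤ), ⁅e, x⁆ = y)
    (hker : ∀ x : g, ⁅ρ, x⁆ = 0 → x ∈ G 0)
    (hspan0 : Submodule.span ℂ (Set.range fun i : Fin ℓ => C i 0) = G 0)
    (hdimb : Module.finrank ℂ (⨆ j : ℕ, G (j : ℤ) : Submodule ℂ g)
      = ∑ i : Fin ℓ, (d i + 1)) :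
    LinearIndependent ℂ (fun q : Σ i : Fin ℓ, Fin (d i + 1) => C q.1 (q.2 : ℕ)) ∧
    Submodule.span ℂ
        (Set.range fun q : Σ i : Fin ℓ, Fin (d i + 1) => C q.1 (q.2 : ℕ))
      = ⨆ j : ℕ, G (j : ℤ) := by
  let _ : Decomposition G := hinternal.chooseDecomposition
  have hgr : IsGradingElement G ρ := hgrade
  set p : Fin ℓ → ℕ → g := fun i => expAdCoeff ℂ e (C i 0)
  have hC0 : ∀ i, C i 0 ∈ G 0 := fun i => hker _ (h0 i)
  have hCp : ∀ i k, k ≤ d i → C i k - p i k ∈ truncBorel G k := fun i =>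
    hgr.sub_expAdCoeff_mem_truncBorel he (hC0 i) fun k hk => hrec i (k + 1) k.succ_pos hk
  have htop : ∀ i, ⁅e, p i (d i)⁆ = 0 := fun i =>
    hgr.lie_expAdCoeff_eq_zero he (hC0 i) (hlast i) (hCp i _ le_rfl)
  have hspan := span_eq_iSup_of_sub_mem_truncBorel (fun i => hgr.expAdCoeff_mem he (hC0 i))
    hCp (le_span_expAdCoeff hspan0.ge htop hsurj)
  refine ⟨?_, hspan⟩
  rw [linearIndependent_iff_card_eq_finrank_span, Set.finrank, hspan, hdimb, Fintype.card_sigma]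
  simp

/-- let `g = ⊕_{j=-h}^{h} g_j` be the principal gradation of a
simple Lie algebra by `ad ρ̌`, let `e = χ ∈ g_1` be regular nilpotent, and let
`C_{i,k}` (`i = 1,…,ℓ`, `0 ≤ k ≤ d_i`) be the coefficients of the expansion of
`d P̄_i(x + uχ)|_{x = ρ̌}` in powers of `u`.  These coefficients satisfy the
recursions `[ρ̌, C_{i,0}] = 0`, `[ρ̌, C_{i,k}] + [e, C_{i,k-1}] = 0`,
`[e, C_{i,d_i}] = 0`; together with the facts that `ad e : g_j → g_{j+1}` is
surjective for `j ≥ 0`, that `ker(ad ρ̌) = g_0`, and that the `C_{i,0}` span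
`g_0` (Kostant), the `C_{i,k}` are linearly independent and span the Borel
subalgebra `b = ⊕_{j ≥ 0} g_j`. -/
theorem shift_coefficients_independent_and_span_borel
    {g : Type*} [LieRing g] [LieAlgebra ℂ g] [FiniteDimensional ℂ g]
    (G : ℤ → Submodule ℂ g)
    (hinternal : DirectSum.IsInternal fun j : ℤ => G j)
    (ρ e : g) (hρ : ρ ∈ G 0) (he : e ∈ G 1)
    (hgrade : ∀ j : ℤ, ∀ x ∈ G j, ⁅ρ, x⁆ = (j : ℂ) • x)
    {ℓ : ℕ} (d : Fin ℓ → ℕ)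
    (C : Fin ℓ → ℕ → g)
    (h0 : ∀ i, ⁅ρ, C i 0⁆ = 0)
    (hrec : ∀ (i : Fin ℓ) (k : ℕ), 0 < k → k ≤ d i →
      ⁅ρ, C i k⁆ + ⁅e, C i (k - 1)⁆ = 0)
    (hlast : ∀ i, ⁅e, C i (d i)⁆ = 0)
    (hsurj : ∀ j : ℕ, ∀ y ∈ G ((j : ℤ) + 1), ∃ x ∈ G (j : ℤ), ⁅e, x⁆ = y)
    (hker : ∀ x : g, ⁅ρ, x⁆ = 0 → x ∈ G 0)
    (hspan0 : Submodule.span ℂ (Set.range fun i : Fin ℓ => C i 0) = G 0)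
    (hdimb : Module.finrank ℂ (⨆ j : ℕ, G (j : ℤ) : Submodule ℂ g)
      = ∑ i : Fin ℓ, (d i + 1)) :
    LinearIndependent ℂ (fun q : Σ i : Fin ℓ, Fin (d i + 1) => C q.1 (q.2 : ℕ)) ∧
    Submodule.span ℂ
        (Set.range fun q : Σ i : Fin ℓ, Fin (d i + 1) => C q.1 (q.2 : ℕ))
      = ⨆ j : ℕ, G (j : ℤ) :=
  shift_coefficients_independent_and_span_borel_general G hinternal ρ e he hgrade d C h0 hrec hlast
    hsurj hker hspan0 hdimb
end

section
/- Let g be a Lie algebra, z_1,…,z_N ∈ C distinct, and let g_{(z)} ⊂ ⊕_{i=1}^N g((t−z_i)) ⊕ g((t^{-1})) be the image of g-valued rational functions on P^1 regular outside {z_i, ∞} under Laurent expansion. Let M_1,…,M_N be g[[t]]-modules and M_∞ a g[[t]]-module, and let 𝕄_i = Ind_{g[[t−z_i]]⊕C1}^{ĝ} M_i be the induced modules at level κ (similarly at ∞). Then the natural map M_1 ⊗ … ⊗ M_N ⊗ M_∞ → (𝕄_1 ⊗ … ⊗ 𝕄_N ⊗ 𝕄_∞)/g_{(z)} induces an isomorphism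 (⊗_i 𝕄_i ⊗ 𝕄_∞)/g_{(z)} ≅ (⊗_i M_i ⊗ M_∞)/g, where g acts diagonally on the right. -/
open Polynomial

/-- The Laurent expansion of a rational function at the finite point `z`. -/
noncomputable def expandAt (z : ℂ) (r : RatFunc ℂ) : LaurentSeries ℂ :=
  ((RatFunc.laurent z r : RatFunc ℂ) : LaurentSeries ℂ)

/-- The rational function `t ↦ r(1/t)` (used for the expansion at `∞` in the
coordinate `s = t⁻¹`), via `p(1/t) = reverse(p)(t)/t^{deg p}`. -/
noncomputable def ratAtInf (r : RatFunc ℂ) : RatFunc ℂ :=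
  (algebraMap (Polynomial ℂ) (RatFunc ℂ) r.num.reverse / RatFunc.X ^ r.num.natDegree) *
    (RatFunc.X ^ r.denom.natDegree / algebraMap (Polynomial ℂ) (RatFunc ℂ) r.denom.reverse)

/-!
Existence: add up the principal parts `∑_{k<0} F_{i,k} (t - z_i)^k` and `∑_{k<0} F_{∞,k} t^{-k}`
and shift by a constant so that the sum vanishes at `u`; each summand is regular at every point
other than its own. Uniqueness: the difference of two solutions has no pole on `ℙ¹`, so it is a
constant (`ℂ` is algebraically closed), and it vanishes at `u`.

Regularity at `w` is read off the `X`-adic valuation after the change of variable `t ↦ t + w`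
(`t ↦ t⁻¹` at `∞`): its integers are exactly the Laurent series without principal part, and on
`p / q` in lowest terms it is `≤ 1` exactly when `q(w) ≠ 0`.
-/

namespace RatFunc

variable {K : Type*} [Field K]

noncomputable def toLaurentSeries : RatFunc K →ₐ[K] LaurentSeries K :=
  { algebraMap (RatFunc K) (LaurentSeries K) with
    commutes' := fun c => by
      change algebraMap (RatFunc K) _ (algebraMap K _ c) = _
      rw [algebraMap_eq_C, ← algebraMap_C, ← IsScalarTower.algebraMap_apply,
        HahnSeries.algebraMap_apply', HahnSeries.algebraMap_apply', ← Polynomial.algebraMap_eq,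
        ← IsScalarTower.algebraMap_apply] }

theorem algebraMap_laurentSeries (c : K) :
    algebraMap K (LaurentSeries K) c = HahnSeries.C c := by
  rw [HahnSeries.algebraMap_apply']
  simp

noncomputable def laurentSeriesAt (w : K) : RatFunc K →ₐ[K] LaurentSeries K :=
  toLaurentSeries.comp (laurent w)

theorem laurentSeriesAt_apply (w : K) (r : RatFunc K) :
    laurentSeriesAt w r = (laurent w r : LaurentSeries K) := rfl

theorem laurentSeriesAt_X_sub_C (w : K) :
    laurentSeriesAt w (X - C w) = HahnSeries.single 1 1 := by
  simp [laurentSeriesAt_apply, laurent_X, laurent_C]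

theorem algebraMap_reverse (p : K[X]) :
    algebraMap K[X] (RatFunc K) p.reverse = aeval (X⁻¹ : RatFunc K) p * X ^ p.natDegree := by
  let _ : Invertible (X⁻¹ : RatFunc K) := invertibleOfNonzero (inv_ne_zero X_ne_zero)
  have h := eval₂_reverse_mul_pow (algebraMap K (RatFunc K)) (X⁻¹ : RatFunc K) p
  rw [invOf_eq_inv, inv_inv, ← aeval_def, ← aeval_def, ← algebraMap_X, aeval_algebraMap_apply,
    aeval_X_left_apply, algebraMap_X] at h
  rw [← h, inv_pow, mul_assoc, inv_mul_cancel₀ (pow_ne_zero _ X_ne_zero), mul_one]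

theorem aeval_X_inv_injective : Function.Injective (aeval (R := K) (X⁻¹ : RatFunc K)) := by
  refine (injective_iff_map_eq_zero _).2 fun p hp => ?_
  have h := algebraMap_reverse p
  rwa [hp, zero_mul, map_eq_zero_iff _ (IsFractionRing.injective K[X] (RatFunc K)),
    reverse_eq_zero] at h

/-- The substitution `X ↦ X⁻¹`, which exchanges `0` and `∞`. -/
noncomputable def invX : RatFunc K →ₐ[K] RatFunc K :=
  liftAlgHom (aeval X⁻¹)
    (nonZeroDivisors_le_comap_nonZeroDivisors_of_injective _ aeval_X_inv_injective)

theorem invX_apply (r : RatFunc K) : invX r = aeval X⁻¹ r.num / aeval X⁻¹ r.denom :=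
  liftAlgHom_apply _ _ r

theorem invX_algebraMap (p : K[X]) : invX (algebraMap K[X] (RatFunc K) p) = aeval X⁻¹ p := by
  simpa [invX] using liftAlgHom_apply_div (aeval (X⁻¹ : RatFunc K)) _ p 1

theorem invX_C (c : K) : invX (C c) = C c := by
  rw [← algebraMap_eq_C, AlgHom.commutes]

theorem invX_X : invX (X : RatFunc K) = X⁻¹ := by
  rw [← algebraMap_X, invX_algebraMap, aeval_X, algebraMap_X]

theorem invX_X_inv : invX (X⁻¹ : RatFunc K) = X := by
  rw [map_inv₀, invX_X, inv_inv]

theorem valuation_algebraMap_le_one (p : K[X]) :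
    Valued.v (algebraMap K[X] (RatFunc K) p) ≤ 1 :=
  IsDedekindDomain.HeightOneSpectrum.valuation_le_one _ p

theorem valuation_algebraMap_lt_one_iff (p : K[X]) :
    Valued.v (algebraMap K[X] (RatFunc K) p) < 1 ↔ p.coeff 0 = 0 := by
  rw [v_def, IsDedekindDomain.HeightOneSpectrum.valuation_lt_one_iff_mem, Polynomial.idealX_span,
    Ideal.mem_span_singleton, X_dvd_iff]

theorem valuation_laurent_le_one_iff (w : K) (r : RatFunc K) :
    Valued.v (laurent w r) ≤ 1 ↔ r.denom.eval w ≠ 0 := by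
  have hlt (p : K[X]) :
      Valued.v (algebraMap K[X] (RatFunc K) (taylor w p)) < 1 ↔ p.eval w = 0 := by
    rw [valuation_algebraMap_lt_one_iff, taylor_coeff_zero]
  have heq {p : K[X]} (hp : p.eval w ≠ 0) :
      Valued.v (algebraMap K[X] (RatFunc K) (taylor w p)) = 1 :=
    (valuation_algebraMap_le_one _).antisymm (not_lt.1 ((hlt p).not.2 hp))
  rw [← num_div_denom r, laurent_div, map_div₀, num_div_denom]
  by_cases hd : r.denom.eval w = 0
  · -- `num` and `denom` are coprime, so they do not both vanish at `w`
    have hn : r.num.eval w ≠ 0 := fun hn => by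
      obtain ⟨a, b, hab⟩ := isCoprime_num_denom r
      simpa [hn, hd] using congrArg (Polynomial.eval w) hab
    have hd0 : Valued.v (algebraMap K[X] (RatFunc K) (taylor w r.denom)) ≠ 0 := by
      simp [denom_ne_zero]
    rw [heq hn, div_le_iff₀ (zero_lt_iff.2 hd0), one_mul]
    simpa [hd] using (hlt _).2 hd
  · rw [heq hd, div_one]
    exact iff_of_true (valuation_algebraMap_le_one _) hd

noncomputable def regularAt (w : K) : Subalgebra K (RatFunc K) :=
  { (Valued.v : Valuation (RatFunc K) _).integer.comap (laurent w).toRingHom with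
    algebraMap_mem' := fun c => by
      simpa [Valuation.mem_integer_iff, algebraMap_eq_C, ← algebraMap_C] using
        valuation_algebraMap_le_one (Polynomial.C c) }

noncomputable def regularAtInf : Subalgebra K (RatFunc K) :=
  (regularAt 0).comap invX

theorem mem_regularAt_iff_eval_denom {w : K} {r : RatFunc K} :
    r ∈ regularAt w ↔ r.denom.eval w ≠ 0 :=
  valuation_laurent_le_one_iff w r

theorem mem_regularAt_iff_coeff {w : K} {r : RatFunc K} :
    r ∈ regularAt w ↔ ∀ n < 0, (laurentSeriesAt w r).coeff n = 0 := by
  change Valued.v (laurent w r) ≤ 1 ↔ _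
  rw [← LaurentSeries.valuation_coe_ratFunc, ← WithZero.exp_zero, ← neg_zero,
    LaurentSeries.valuation_le_iff_coeff_lt_eq_zero]
  rfl

theorem mem_regularAtInf_iff_coeff {r : RatFunc K} :
    r ∈ regularAtInf ↔ ∀ n < 0, (laurentSeriesAt 0 (invX r)).coeff n = 0 := by
  rw [regularAtInf, Subalgebra.mem_comap, mem_regularAt_iff_coeff]

theorem C_mem (A : Subalgebra K (RatFunc K)) (c : K) : C c ∈ A := by
  rw [← algebraMap_eq_C]
  exact A.algebraMap_mem c

theorem algebraMap_div_mem_regularAt {w : K} (p : K[X]) {q : K[X]} (hq : q.eval w ≠ 0) :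
    algebraMap K[X] (RatFunc K) p / algebraMap K[X] (RatFunc K) q ∈ regularAt w := by
  have hdvd := (denom_dvd (q := q) (fun h => hq (by rw [h, Polynomial.eval_zero]))).2 ⟨p, rfl⟩
  exact mem_regularAt_iff_eval_denom.2 fun h => hq (eval_eq_zero_of_dvd_of_eval_eq_zero hdvd h)

theorem algebraMap_mem_regularAt (w : K) (p : K[X]) :
    algebraMap K[X] (RatFunc K) p ∈ regularAt w := by
  simpa using algebraMap_div_mem_regularAt (w := w) p (q := 1) (by simp)

theorem inv_X_sub_C_mem_regularAt {v w : K} (hvw : v ≠ w) : (X - C v)⁻¹ ∈ regularAt w := by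
  have h := algebraMap_div_mem_regularAt 1 (q := Polynomial.X - Polynomial.C v)
    (by simpa [sub_eq_zero] using hvw.symm)
  simpa [algebraMap_X, algebraMap_C] using h

theorem inv_X_sub_C_mem_regularAtInf (v : K) : (X - C v)⁻¹ ∈ regularAtInf := by
  have h := algebraMap_div_mem_regularAt (w := 0) Polynomial.X
    (q := 1 - Polynomial.C v * Polynomial.X) (by simp)
  have hinv : invX ((X - C v)⁻¹) = X / (1 - C v * X) := by
    rw [map_inv₀, map_sub, invX_X, invX_C, ← inv_div]
    congr 1
    field_simp [X_ne_zero]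
  rw [regularAtInf, Subalgebra.mem_comap, hinv]
  simpa [algebraMap_X, algebraMap_C] using h

theorem coeff_laurentSeriesAt_add_of_mem {w : K} {r s : RatFunc K} (hs : s ∈ regularAt w)
    {n : ℤ} (hn : n < 0) :
    (laurentSeriesAt w (r + s)).coeff n = (laurentSeriesAt w r).coeff n := by
  rw [map_add, HahnSeries.coeff_add, mem_regularAt_iff_coeff.1 hs n hn, add_zero]

theorem coeff_laurentSeriesAt_invX_add_of_mem {r s : RatFunc K} (hs : s ∈ regularAtInf)
    {n : ℤ} (hn : n < 0) :
    (laurentSeriesAt 0 (invX (r + s))).coeff n = (laurentSeriesAt 0 (invX r)).coeff n := by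
  rw [map_add]
  exact coeff_laurentSeriesAt_add_of_mem ((Subalgebra.mem_comap _ _ _).1 hs) hn

theorem eval_add_C {w : K} {r : RatFunc K} (hr : r ∈ regularAt w) (c : K) :
    eval (RingHom.id K) w (r + C c) = eval (RingHom.id K) w r + c := by
  rw [eval_add _ _ (mem_regularAt_iff_eval_denom.1 hr) (by simp [denom_C]), eval_C]
  rfl

/-- `Finset.Ico F.order 0` contains every negative index at which `F` has a nonzero
coefficient. -/
noncomputable def principalPart (t : RatFunc K) (F : LaurentSeries K) : RatFunc K :=
  ∑ k ∈ Finset.Ico F.order 0, F.coeff k • t ^ k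

theorem coeff_principalPart (Θ : RatFunc K →ₐ[K] LaurentSeries K) {t : RatFunc K}
    (ht : Θ t = HahnSeries.single 1 1) (F : LaurentSeries K) {n : ℤ} (hn : n < 0) :
    (Θ (principalPart t F)).coeff n = F.coeff n := by
  have hterm (k : ℤ) (c : K) : Θ (c • t ^ k) = HahnSeries.single k c := by
    rw [Algebra.smul_def, map_mul, AlgHom.commutes, map_zpow₀, ht, ← single_zpow,
      algebraMap_laurentSeries, HahnSeries.C_apply, HahnSeries.single_mul_single, zero_add,
      mul_one]
  simp only [principalPart, map_sum, hterm, HahnSeries.coeff_sum, HahnSeries.coeff_single]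
  rw [Finset.sum_eq_single n]
  · exact if_pos rfl
  · exact fun k _ hk => if_neg hk.symm
  · intro hmem
    rw [if_pos rfl, HahnSeries.coeff_eq_zero_of_lt_order]
    simp_all

theorem principalPart_mem (A : Subalgebra K (RatFunc K)) {t : RatFunc K} (ht : t⁻¹ ∈ A)
    (F : LaurentSeries K) : principalPart t F ∈ A := by
  refine Subalgebra.sum_mem _ fun k hk => Subalgebra.smul_mem _ ?_ _
  obtain ⟨m, hm⟩ := Int.eq_ofNat_of_zero_le (neg_nonneg.2 (Finset.mem_Ico.1 hk).2.le)
  rw [← inv_inv t, inv_zpow', hm, zpow_natCast]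
  exact Subalgebra.pow_mem _ ht m

theorem exists_principalParts {ι : Type*} [Fintype ι] {z : ι → K} (hz : Function.Injective z)
    (F : ι → LaurentSeries K) (Finf : LaurentSeries K) :
    ∃ P : RatFunc K, (∀ w ∉ Set.range z, P ∈ regularAt w) ∧
      (∀ i, ∀ n < 0, (laurentSeriesAt (z i) P).coeff n = (F i).coeff n) ∧
      ∀ n < 0, (laurentSeriesAt 0 (invX P)).coeff n = Finf.coeff n := by
  classical
  set pp : ι → RatFunc K := fun i => principalPart (X - C (z i)) (F i)
  set ppInf := principalPart X⁻¹ Finf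
  have hpp {i : ι} {w : K} (hw : z i ≠ w) : pp i ∈ regularAt w :=
    principalPart_mem _ (inv_X_sub_C_mem_regularAt hw) _
  have hppInf (w : K) : ppInf ∈ regularAt w :=
    principalPart_mem _ (by simpa [algebraMap_X] using algebraMap_mem_regularAt w Polynomial.X) _
  refine ⟨∑ i, pp i + ppInf, fun w hw => ?_, fun i n hn => ?_, fun n hn => ?_⟩
  · exact add_mem (Subalgebra.sum_mem _ fun i _ => hpp fun h => hw ⟨i, h⟩) (hppInf w)
  · rw [← Finset.add_sum_erase _ _ (Finset.mem_univ i), add_assoc,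
      coeff_laurentSeriesAt_add_of_mem (add_mem (Subalgebra.sum_mem _ fun j hj =>
        hpp (hz.ne (Finset.ne_of_mem_erase hj))) (hppInf _)) hn]
    exact coeff_principalPart _ (laurentSeriesAt_X_sub_C _) _ hn
  · rw [add_comm, coeff_laurentSeriesAt_invX_add_of_mem (Subalgebra.sum_mem _ fun i _ =>
      principalPart_mem _ (inv_X_sub_C_mem_regularAtInf _) _) hn]
    have ht : (laurentSeriesAt (0 : K)).comp invX X⁻¹ = HahnSeries.single 1 1 := by
      rw [AlgHom.comp_apply, invX_X_inv, laurentSeriesAt_apply, laurent_at_zero, coe_X]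
    simpa only [AlgHom.comp_apply] using coeff_principalPart _ ht Finf hn

theorem natDegree_eq_zero_of_algebraMap_mem_regularAtInf {p : K[X]}
    (hp : algebraMap K[X] (RatFunc K) p ∈ regularAtInf) : p.natDegree = 0 := by
  by_contra hd
  have hp0 : p ≠ 0 := by rintro rfl; simp at hd
  have hle : Valued.v (aeval (X⁻¹ : RatFunc K) p) ≤ 1 := by
    rw [← invX_algebraMap, ← laurent_at_zero (invX _)]
    exact hp
  have hrev : Valued.v (algebraMap K[X] (RatFunc K) p.reverse) = 1 := by
    refine (valuation_algebraMap_le_one _).antisymm (not_lt.1 ?_)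
    rw [valuation_algebraMap_lt_one_iff, coeff_zero_reverse]
    exact leadingCoeff_ne_zero.2 hp0
  have hX : Valued.v (X : RatFunc K) < 1 := by
    rw [← algebraMap_X, valuation_algebraMap_lt_one_iff, coeff_X_zero]
  -- `reverse p = p(X⁻¹) X^{deg p}` is a unit at `0`, while `p(X⁻¹)` has no pole there
  have := congrArg Valued.v (algebraMap_reverse p)
  rw [hrev, map_mul, map_pow] at this
  exact (this.le.trans (mul_le_of_le_one_left' hle)).not_gt (pow_lt_one₀ zero_le hX hd)

theorem exists_eq_C_of_mem_regularAt [IsAlgClosed K] {r : RatFunc K}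
    (h : ∀ w, r ∈ regularAt w) (hinf : r ∈ regularAtInf) : ∃ c, r = C c := by
  have hdenom : r.denom = 1 := by
    rw [← (monic_denom r).natDegree_eq_zero, ← IsAlgClosed.roots_eq_zero_iff_natDegree_eq_zero]
    exact Multiset.eq_zero_of_forall_notMem fun w hw =>
      mem_regularAt_iff_eval_denom.1 (h w) ((mem_roots (denom_ne_zero r)).1 hw)
  obtain ⟨p, rfl⟩ : ∃ p : K[X], r = algebraMap K[X] (RatFunc K) p :=
    ⟨r.num, by conv_lhs => rw [← num_div_denom r, hdenom, map_one, div_one]⟩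
  refine ⟨p.coeff 0, ?_⟩
  rw [eq_C_of_natDegree_eq_zero (natDegree_eq_zero_of_algebraMap_mem_regularAtInf hinf),
    algebraMap_C, coeff_C_zero]

theorem eq_of_coeff_laurentSeriesAt_eq [IsAlgClosed K] {S : Set K} {u : K} (hu : u ∉ S)
    {r s : RatFunc K} (hr : ∀ w ∉ S, r ∈ regularAt w) (hs : ∀ w ∉ S, s ∈ regularAt w)
    (hfin : ∀ w ∈ S, ∀ n < 0, (laurentSeriesAt w r).coeff n = (laurentSeriesAt w s).coeff n)
    (hinf : ∀ n < 0,
      (laurentSeriesAt 0 (invX r)).coeff n = (laurentSeriesAt 0 (invX s)).coeff n)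
    (heval : eval (RingHom.id K) u r = eval (RingHom.id K) u s) : r = s := by
  have hreg (w : K) : r - s ∈ regularAt w := by
    by_cases hw : w ∈ S
    · refine mem_regularAt_iff_coeff.2 fun n hn => ?_
      rw [map_sub, HahnSeries.coeff_sub, hfin w hw n hn, sub_self]
    · exact sub_mem (hr w hw) (hs w hw)
  have hregInf : r - s ∈ regularAtInf := mem_regularAtInf_iff_coeff.2 fun n hn => by
    rw [map_sub, map_sub, HahnSeries.coeff_sub, hinf n hn, sub_self]
  obtain ⟨c, hc⟩ := exists_eq_C_of_mem_regularAt hreg hregInf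
  rw [sub_eq_iff_eq_add'] at hc
  rw [hc, eval_add_C (hs u hu), add_eq_left] at heval
  rw [hc, heval, map_zero, add_zero]

end RatFunc

open RatFunc

theorem expandAt_eq_laurentSeriesAt (z : ℂ) (r : RatFunc ℂ) :
    expandAt z r = laurentSeriesAt z r :=
  rfl

theorem ratAtInf_eq_invX (r : RatFunc ℂ) : ratAtInf r = invX r := by
  have hd : aeval (X⁻¹ : RatFunc ℂ) r.denom ≠ 0 :=
    (map_ne_zero_iff _ aeval_X_inv_injective).2 (denom_ne_zero r)
  rw [ratAtInf, invX_apply, algebraMap_reverse, algebraMap_reverse]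
  field_simp [RatFunc.X_ne_zero]

theorem coe_ratAtInf (r : RatFunc ℂ) :
    ((ratAtInf r : RatFunc ℂ) : LaurentSeries ℂ) = laurentSeriesAt 0 (invX r) := by
  rw [ratAtInf_eq_invX, laurentSeriesAt_apply, laurent_at_zero]

/-- key vector-space decomposition behind the isomorphism of
coinvariants, Lemma 1 of [FFR]: one has
`⊕_i ℂ((t-z_i)) ⊕ ℂ((t⁻¹)) = (⊕_i ℂ[[t-z_i]] ⊕ ℂ[[t⁻¹]]) ⊕ g⁰_{(z)}`,
i.e. given arbitrary Laurent tails `F_i` at the points `z_i` and `F_∞` at `∞`,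
there is a *unique* rational function `r` on `P¹`, regular outside
`{z_1,…,z_N,∞}` and vanishing at the auxiliary point `u`, whose principal part
at each `z_i` matches that of `F_i` and whose principal part at `∞` (in the
coordinate `s = t⁻¹`) matches that of `F_∞`.  (The `g`-valued statement follows
componentwise.) -/
theorem rational_function_principal_part_decomposition
    {N : ℕ} (z : Fin N → ℂ) (hz : Function.Injective z)
    (u : ℂ) (hu : u ∉ Set.range z)
    (F : Fin N → LaurentSeries ℂ) (Finf : LaurentSeries ℂ) :
    ∃! r : RatFunc ℂ,
      (∀ w : ℂ, w ∉ Set.range z → Polynomial.eval w r.denom ≠ 0) ∧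
      RatFunc.eval (RingHom.id ℂ) u r = 0 ∧
      (∀ (i : Fin N) (n : ℤ), n < 0 → (expandAt (z i) r).coeff n = (F i).coeff n) ∧
      (∀ n : ℤ, n < 0 → ((ratAtInf r : RatFunc ℂ) : LaurentSeries ℂ).coeff n
        = Finf.coeff n) := by
  simp only [← mem_regularAt_iff_eval_denom, expandAt_eq_laurentSeriesAt, coe_ratAtInf]
  obtain ⟨P, hPreg, hPfin, hPinf⟩ := exists_principalParts hz F Finf
  set r := P + RatFunc.C (-RatFunc.eval (RingHom.id ℂ) u P)
  have hr (w : ℂ) (hw : w ∉ Set.range z) : r ∈ regularAt w := add_mem (hPreg w hw) (C_mem _ _)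
  have hru : RatFunc.eval (RingHom.id ℂ) u r = 0 := by
    rw [eval_add_C (hPreg u hu), add_neg_cancel]
  have hrfin (i : Fin N) (n : ℤ) (hn : n < 0) :
      (laurentSeriesAt (z i) r).coeff n = (F i).coeff n := by
    rw [coeff_laurentSeriesAt_add_of_mem (C_mem _ _) hn, hPfin i n hn]
  have hrinf (n : ℤ) (hn : n < 0) : (laurentSeriesAt 0 (invX r)).coeff n = Finf.coeff n := by
    rw [coeff_laurentSeriesAt_invX_add_of_mem (C_mem _ _) hn, hPinf n hn]
  refine ⟨r, ⟨hr, hru, hrfin, hrinf⟩, fun s ⟨hs, hsu, hsfin, hsinf⟩ => ?_⟩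
  refine eq_of_coeff_laurentSeriesAt_eq hu hs hr ?_
    (fun n hn => (hsinf n hn).trans (hrinf n hn).symm) (hsu.trans hru.symm)
  rintro _ ⟨i, rfl⟩ n hn
  rw [hsfin i n hn, hrfin i n hn]
end

section
/- Let g be simple and χ ∈ g* regular. Then the restrictions of the polynomials P̄_{i,n}, for i = 1,…,ℓ and n < −1, to the affine subspace χ + t g*[[t]] ⊂ g*[[t]] are algebraically independent: the differentials of P̄_{i,n} at the point χ (constant series) are the linearly independent vectors (dP̄_i|_χ) ⊗ t^n ∈ g((t))/t^{-1}g[[t]]. -/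
/-!
A polynomial over an infinite field that vanishes on the image of a surjective map vanishes
identically, so it suffices to show that `ψ ↦ (coeff k (P_i (χ + t ψ)))_{i, k ≥ 1}` is onto.
This system is triangular: coefficient `m + 1` of `P_i (χ + t ψ)` only involves the coefficients
of `ψ` up to `t ^ m`, and depends on the `t ^ m`-coefficient `c` through the term
`∑ j, ∂_j P_i (χ) * c j`, which is a surjective linear map of `c` because the differentials
`dP_i|_χ` are linearly independent. So `ψ` can be solved for one coefficient at a time.
-/

open MvPolynomial Finset

theorem Matrix.mulVec_surjective_of_linearIndependent_row {K m n : Type*} [Field K] [Finite m]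
    [Fintype n] {M : Matrix m n K} (hM : LinearIndependent K M.row) :
    Function.Surjective M.mulVec := by
  have hspan : Submodule.span K (Set.range M.col) = ⊤ :=
    span_flip_eq_top_iff_linearIndependent.mpr hM
  rw [← Matrix.range_mulVecLin] at hspan
  exact LinearMap.range_eq_top.mp hspan

theorem algebraicIndependent_of_surjective_eval {K X ι : Type*} [Field K] [Infinite K]
    (f : ι → X → K) (hf : Function.Surjective fun x i => f i x) :
    AlgebraicIndependent K f := by
  refine algebraicIndependent_iff.mpr fun Q hQ => MvPolynomial.funext fun v => ?_
  obtain ⟨x, rfl⟩ := hf v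
  have hx := congrArg (Pi.evalAlgHom K (fun _ => K) x) hQ
  rw [comp_aeval_apply] at hx
  simpa using hx

namespace MvPolynomial

variable {R S σ : Type*} [CommRing R] [CommRing S] [Algebra R S]

theorem aeval_sub_aeval_mem (I : Ideal S) {x y : σ → S} (h : ∀ j, x j - y j ∈ I)
    (p : MvPolynomial σ R) : aeval x p - aeval y p ∈ I := by
  rw [← Ideal.Quotient.eq, ← Ideal.Quotient.mkₐ_eq_mk R, comp_aeval_apply, comp_aeval_apply]
  congr 2
  funext j
  exact Ideal.Quotient.eq.mpr (h j)

theorem aeval_add_of_mul_eq_zero [Fintype σ] (x e : σ → S) (he : ∀ i j, e i * e j = 0)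
    (p : MvPolynomial σ R) :
    aeval (x + e) p = aeval x p + ∑ j, aeval x (pderiv j p) * e j := by
  induction p using MvPolynomial.induction_on with
  | C a => simp
  | add p q hp hq => simp only [map_add, hp, hq, add_mul, sum_add_distrib]; ring
  | mul_X p i hp =>
    classical
    have hcross : (∑ j, aeval x (pderiv j p) * e j) * e i = 0 := by
      simp [sum_mul, mul_assoc, he]
    simp only [map_mul, aeval_X, hp, Derivation.leibniz, smul_eq_mul, map_add,
      add_mul, sum_add_distrib, Pi.add_apply]
    have hsingle :
        ∑ j, aeval x p * aeval x (pderiv j (X i : MvPolynomial σ R)) * e j = aeval x p * e i := by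
      rw [Fintype.sum_eq_single i fun j hj => by rw [pderiv_X_of_ne (Ne.symm hj)]; simp]
      simp
    have hfactor :
        ∑ j, x i * aeval x (pderiv j p) * e j = x i * ∑ j, aeval x (pderiv j p) * e j := by
      simp only [mul_sum, mul_assoc]
    rw [hsingle, hfactor]
    linear_combination hcross

theorem aeval_add_sub_sum_pderiv_mem [Fintype σ] (I : Ideal S) (x e : σ → S)
    (he : ∀ i j, e i * e j ∈ I) (p : MvPolynomial σ R) :
    aeval (x + e) p - (aeval x p + ∑ j, aeval x (pderiv j p) * e j) ∈ I := by
  let π := Ideal.Quotient.mkₐ R I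
  have hπ : π (aeval (x + e) p) = π (aeval x p + ∑ j, aeval x (pderiv j p) * e j) := by
    simp only [map_add, map_sum, map_mul, comp_aeval_apply]
    exact aeval_add_of_mul_eq_zero (π ∘ x) (π ∘ e)
      (fun i j => by simpa [π, ← map_mul] using Ideal.Quotient.eq_zero_iff_mem.mpr (he i j)) p
  exact Ideal.Quotient.eq.mp hπ

end MvPolynomial

namespace PowerSeries

variable {R σ : Type*} [CommRing R]

theorem coeff_aeval_eq_of_coeff_eq {k : ℕ} {x y : σ → R⟦X⟧}
    (h : ∀ j, ∀ m ≤ k, coeff m (x j) = coeff m (y j)) (p : MvPolynomial σ R) :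
    coeff k (MvPolynomial.aeval x p) = coeff k (MvPolynomial.aeval y p) := by
  have hmem := aeval_sub_aeval_mem (x := x) (y := y) (Ideal.span {(X : R⟦X⟧) ^ (k + 1)})
    (fun j => Ideal.mem_span_singleton.mpr <| X_pow_dvd_iff.mpr fun m hm => by
      rw [map_sub, h j m (by omega), sub_self]) p
  rw [Ideal.mem_span_singleton, X_pow_dvd_iff] at hmem
  rw [← sub_eq_zero, ← map_sub]
  exact hmem k (by omega)

theorem constantCoeff_aeval (x : σ → R⟦X⟧) (p : MvPolynomial σ R) :
    constantCoeff (MvPolynomial.aeval x p) = eval (fun j => constantCoeff (x j)) p := by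
  simp [map_aeval]

theorem coeff_aeval_add_C_mul_X_pow [Fintype σ] {k : ℕ} (hk : k ≠ 0) (x : σ → R⟦X⟧)
    (c : σ → R) (p : MvPolynomial σ R) :
    coeff k (MvPolynomial.aeval (fun j => x j + C (c j) * X ^ k) p)
      = coeff k (MvPolynomial.aeval x p)
        + ∑ j, eval (fun j => constantCoeff (x j)) (pderiv j p) * c j := by
  -- the perturbation is first order modulo `X ^ (k + 1)`, since `X ^ (2 * k)` vanishes there
  have hmem := aeval_add_sub_sum_pderiv_mem (Ideal.span {(X : R⟦X⟧) ^ (k + 1)}) x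
    (fun j => C (c j) * X ^ k) (fun i j => Ideal.mem_span_singleton.mpr <| by
      rw [mul_mul_mul_comm, ← pow_add]
      exact (pow_dvd_pow X (by omega)).mul_left _) p
  rw [Ideal.mem_span_singleton, X_pow_dvd_iff] at hmem
  have hcoeff := hmem k (by omega)
  rw [map_sub, sub_eq_zero] at hcoeff
  rw [show (fun j => x j + C (c j) * X ^ k) = x + fun j => C (c j) * X ^ k from rfl, hcoeff,
    map_add, map_sum]
  congr 1
  refine sum_congr rfl fun j _ => ?_
  rw [mul_left_comm, coeff_C_mul, coeff_mul_X_pow', if_pos le_rfl, Nat.sub_self,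
    coeff_zero_eq_constantCoeff_apply, constantCoeff_aeval, mul_comm]

theorem coeff_succ_aeval_C_add_X_mul_eq_of_coeff_eq (χ : σ → R) {m : ℕ} {ψ ψ' : σ → R⟦X⟧}
    (h : ∀ j, ∀ p ≤ m, coeff p (ψ j) = coeff p (ψ' j)) (P : MvPolynomial σ R) :
    coeff (m + 1) (MvPolynomial.aeval (fun j => C (χ j) + X * ψ j) P)
      = coeff (m + 1) (MvPolynomial.aeval (fun j => C (χ j) + X * ψ' j) P) := by
  refine coeff_aeval_eq_of_coeff_eq (fun j p hp => ?_) P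
  cases p with
  | zero => simp
  | succ p => simp [coeff_succ_X_mul, h j p (by omega)]

theorem coeff_succ_aeval_C_add_X_mul_add [Fintype σ] (χ : σ → R) (m : ℕ) (ψ : σ → R⟦X⟧)
    (c : σ → R) (P : MvPolynomial σ R) :
    coeff (m + 1) (MvPolynomial.aeval (fun j => C (χ j) + X * (ψ j + C (c j) * X ^ m)) P)
      = coeff (m + 1) (MvPolynomial.aeval (fun j => C (χ j) + X * ψ j) P)
        + ∑ j, eval χ (pderiv j P) * c j := by
  have hshift : (fun j => C (χ j) + X * (ψ j + C (c j) * X ^ m))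
      = fun j => (C (χ j) + X * ψ j) + C (c j) * X ^ (m + 1) := by
    funext j
    ring
  rw [hshift, coeff_aeval_add_C_mul_X_pow m.succ_ne_zero]
  simp

variable {ι : Type*}

/-- For `s` a right inverse of the linearization `L` of `F`, step `m` adds the multiple of `X ^ m`
that corrects coefficient `m + 1` of `F` to `v m`. -/
noncomputable def successiveApprox (F : (σ → R⟦X⟧) → ι → R⟦X⟧) (s : (ι → R) → σ → R)
    (v : ℕ → ι → R) : ℕ → σ → R⟦X⟧
  | 0 => 0
  | m + 1 => fun j => successiveApprox F s v m j
      + C (s (v m - fun i => coeff (m + 1) (F (successiveApprox F s v m) i)) j) * X ^ m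

theorem coeff_successiveApprox_of_lt (F : (σ → R⟦X⟧) → ι → R⟦X⟧) (s : (ι → R) → σ → R)
    (v : ℕ → ι → R) {p m : ℕ} (h : p < m) (j : σ) :
    coeff p (successiveApprox F s v m j) = coeff p (successiveApprox F s v (p + 1) j) := by
  induction m, h using Nat.le_induction with
  | base => rfl
  | succ m hm ih =>
    rw [successiveApprox, map_add, coeff_C_mul_X_pow, if_neg (by omega), add_zero, ih]

theorem exists_coeff_succ_eq_of_triangular (F : (σ → R⟦X⟧) → ι → R⟦X⟧)
    (L : (σ → R) → ι → R) (hL : Function.Surjective L)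
    (hlocal : ∀ m (ψ ψ' : σ → R⟦X⟧), (∀ j, ∀ p ≤ m, coeff p (ψ j) = coeff p (ψ' j)) →
      ∀ i, coeff (m + 1) (F ψ i) = coeff (m + 1) (F ψ' i))
    (hstep : ∀ m ψ c i,
      coeff (m + 1) (F (fun j => ψ j + C (c j) * X ^ m) i) = coeff (m + 1) (F ψ i) + L c i)
    (v : ℕ → ι → R) : ∃ ψ : σ → R⟦X⟧, ∀ m i, coeff (m + 1) (F ψ i) = v m i := by
  set B := successiveApprox F (Function.surjInv hL) v
  refine ⟨fun j => mk fun p => coeff p (B (p + 1) j), fun m i => ?_⟩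
  have hagree :
      ∀ j, ∀ p ≤ m, coeff p (mk fun p => coeff p (B (p + 1) j)) = coeff p (B (m + 1) j) :=
    fun j p hp => by rw [coeff_mk, coeff_successiveApprox_of_lt _ _ _ (by omega : p < m + 1)]
  calc coeff (m + 1) (F _ i) = coeff (m + 1) (F (B (m + 1)) i) := hlocal m _ _ hagree i
    _ = coeff (m + 1) (F (B m) i)
          + L (Function.surjInv hL (v m - fun i => coeff (m + 1) (F (B m) i))) i :=
        hstep m (B m) _ i
    _ = v m i := by simp [Function.surjInv_eq hL]

end PowerSeries

/-- `g*` is modelled as `Fin n → ℂ` and a point of `χ + t g*[[t]]` as `χ + t ψ`; the restriction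
of `P̄_{i,m}` (`m < -1`) is the coefficient of `t ^ k`, `k = -m - 1 ≥ 1`, of `P_i (χ + t ψ)`. -/
theorem restricted_invariants_algebraically_independent
    {n ℓ : ℕ}
    (P : Fin ℓ → MvPolynomial (Fin n) ℂ)
    (χ : Fin n → ℂ)
    (hKostant : LinearIndependent ℂ
      (fun i : Fin ℓ => fun j : Fin n => eval χ (pderiv j (P i)))) :
    AlgebraicIndependent ℂ
      (fun q : Fin ℓ × {k : ℕ // 1 ≤ k} =>
        (fun ψ : Fin n → PowerSeries ℂ =>
          PowerSeries.coeff (q.2 : ℕ)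
            (MvPolynomial.aeval
              (fun j : Fin n =>
                PowerSeries.C (χ j) + PowerSeries.X * ψ j) (P q.1))) :
        Fin ℓ × {k : ℕ // 1 ≤ k} → ((Fin n → PowerSeries ℂ) → ℂ)) := by
  refine algebraicIndependent_of_surjective_eval _ fun w => ?_
  obtain ⟨ψ, hψ⟩ := PowerSeries.exists_coeff_succ_eq_of_triangular
    (fun ψ i => aeval (fun j => PowerSeries.C (χ j) + PowerSeries.X * ψ j) (P i))
    (Matrix.of fun i j => eval χ (pderiv j (P i))).mulVec
    (Matrix.mulVec_surjective_of_linearIndependent_row hKostant)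
    (fun _ _ _ h i => PowerSeries.coeff_succ_aeval_C_add_X_mul_eq_of_coeff_eq χ h (P i))
    (fun m ψ c i => PowerSeries.coeff_succ_aeval_C_add_X_mul_add χ m ψ c (P i))
    (fun m i => w (i, ⟨m + 1, m.succ_pos⟩))
  refine ⟨ψ, funext fun ⟨i, k, hk⟩ => ?_⟩
  obtain ⟨m, rfl⟩ := Nat.exists_eq_add_of_le' hk
  exact hψ m i
end
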